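/- A polynomial A of degree at most 3, written in the Bernstein basis as A(t) = Σ_{k=0}^3 c_k b_{k,3}(t), is a Pickands dependence function if and only if c_0 = c_3 = 1, min(c_1, c_2) ≥ 2/3, and max(2c_1 - c_2, 2c_2 - c_1) ≤ 1. -/

import Mathlib

/-- Bernstein basis polynomial `b_{k,m}(x) = C(m,k) x^k (1-x)^{m-k}`. -/
noncomputable def bern (m k : ℕ) (x : ℝ) : ℝ := (m.choose k : ℝ) * x ^ k * (1 - x) ^ (m - k)

/-- `A` is a Pickands dependence function. -/
def IsPickands (A : ℝ → ℝ) : Prop :=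
  ConvexOn ℝ (Set.Icc (0:ℝ) 1) A ∧
    ∀ t ∈ Set.Icc (0:ℝ) 1, max t (1 - t) ≤ A t ∧ A t ≤ 1

/-!
For `A` differentiable at the endpoints, `A` is a Pickands dependence function iff it is convex on
`[0, 1]` with `A 0 = A 1 = 1`, `A'(0) ≥ -1` and `A'(1) ≤ 1`: the derivative conditions are the
first-order conditions at the minima `0` of `A t - (1 - t)` and `1` of `A t - t`, and conversely a
convex function lies above its tangents at the endpoints and below its chord.

For `A = ∑ c_k b_{k,3}` one has `A 0 = c_0`, `A 1 = c_3`, `A'(0) = 3 (c_1 - c_0)`,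
`A'(1) = 3 (c_3 - c_2)`, and `A'' = 6 ∑ Δ²c_k b_{k,1}` is affine, so `A` is convex iff `A''` is
nonnegative at both endpoints, i.e. `c_0 - 2 c_1 + c_2 ≥ 0` and `c_1 - 2 c_2 + c_3 ≥ 0`.
-/

open Set Filter

section AccPt

variable {α : Type*} [TopologicalSpace α] [LinearOrder α] [OrderTopology α] [DenselyOrdered α]
  {a b : α}

lemma accPt_Icc_left (hab : a < b) : AccPt a (𝓟 (Icc a b)) :=
  accPt_principal_iff_nhdsWithin.2 <| (left_nhdsWithin_Ioo_neBot hab).mono <|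
    nhdsWithin_mono _ fun _ hx => ⟨Ioo_subset_Icc_self hx, hx.1.ne'⟩

lemma accPt_Icc_right (hab : a < b) : AccPt b (𝓟 (Icc a b)) :=
  accPt_principal_iff_nhdsWithin.2 <| (right_nhdsWithin_Ioo_neBot hab).mono <|
    nhdsWithin_mono _ fun _ hx => ⟨Ioo_subset_Icc_self hx, hx.2.ne⟩

end AccPt

lemma IsMinOn.hasDerivWithinAt_sub_mul_nonneg {f : ℝ → ℝ} {s : Set ℝ} {x y f' : ℝ}
    (hmin : IsMinOn f s x) (hs : Convex ℝ s) (hx : x ∈ s) (hy : y ∈ s)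
    (hf : HasDerivWithinAt f f' s x) : 0 ≤ (y - x) * f' := by
  simpa [mul_comm] using hmin.localize.hasFDerivWithinAt_nonneg hf
    (sub_mem_posTangentConeAt_of_segment_subset (hs.segment_subset hx hy))

lemma ConvexOn.add_mul_sub_le_of_hasDerivAt {f : ℝ → ℝ} {S : Set ℝ} {x y f' : ℝ}
    (hfc : ConvexOn ℝ S f) (hx : x ∈ S) (hy : y ∈ S) (hf : HasDerivAt f f' x) :
    f x + f' * (y - x) ≤ f y := by
  rcases lt_trichotomy x y with hxy | rfl | hyx
  · have := hfc.le_slope_of_hasDerivAt hx hy hxy hf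
    rw [slope_def_field, le_div_iff₀ (sub_pos.2 hxy)] at this
    linarith
  · simp
  · have := hfc.slope_le_of_hasDerivAt hy hx hyx hf
    rw [slope_def_field, div_le_iff₀ (sub_pos.2 hyx)] at this
    linarith

lemma ConvexOn.nonneg_of_hasDerivWithinAt2 {S : Set ℝ} {f f' : ℝ → ℝ} {x f'' : ℝ}
    (hfc : ConvexOn ℝ S f) (hf : ∀ y ∈ S, HasDerivAt f (f' y) y)
    (hf' : HasDerivWithinAt f' f'' S x) (hx : AccPt x (𝓟 S)) : 0 ≤ f'' :=
  hf'.nonneg_of_monotoneOn hx <|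
    (hfc.monotoneOn_deriv fun y hy => (hf y hy).differentiableAt).congr fun y hy => (hf y hy).deriv

theorem isPickands_iff_of_hasDerivAt {A : ℝ → ℝ} {a b : ℝ} (ha : HasDerivAt A a 0)
    (hb : HasDerivAt A b 1) :
    IsPickands A ↔ ConvexOn ℝ (Icc 0 1) A ∧ A 0 = 1 ∧ A 1 = 1 ∧ -1 ≤ a ∧ b ≤ 1 := by
  have h0 : (0 : ℝ) ∈ Icc 0 1 := left_mem_Icc.2 zero_le_one
  have h1 : (1 : ℝ) ∈ Icc 0 1 := right_mem_Icc.2 zero_le_one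
  constructor
  · rintro ⟨hconv, hbd⟩
    have hA0 : A 0 = 1 := le_antisymm (hbd 0 h0).2 (by simpa using (hbd 0 h0).1)
    have hA1 : A 1 = 1 := le_antisymm (hbd 1 h1).2 (by simpa using (hbd 1 h1).1)
    have hmin0 : IsMinOn (fun t => A t - (1 - t)) (Icc 0 1) 0 := fun t ht => by
      show A 0 - (1 - 0) ≤ A t - (1 - t)
      linarith [le_max_right t (1 - t), (hbd t ht).1]
    have hmin1 : IsMinOn (fun t => A t - t) (Icc 0 1) 1 := fun t ht => by
      show A 1 - 1 ≤ A t - t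
      linarith [le_max_left t (1 - t), (hbd t ht).1]
    have ha1 := hmin0.hasDerivWithinAt_sub_mul_nonneg (convex_Icc 0 1) h0 h1
      (ha.sub ((hasDerivAt_id 0).const_sub 1)).hasDerivWithinAt
    have hb1 := hmin1.hasDerivWithinAt_sub_mul_nonneg (convex_Icc 0 1) h1 h0
      (hb.sub (hasDerivAt_id 1)).hasDerivWithinAt
    exact ⟨hconv, hA0, hA1, by linarith, by linarith⟩
  · rintro ⟨hconv, hA0, hA1, ha1, hb1⟩
    refine ⟨hconv, fun t ht => ⟨max_le ?_ ?_, ?_⟩⟩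
    · nlinarith [hconv.add_mul_sub_le_of_hasDerivAt h1 ht hb, ht.2]
    · nlinarith [hconv.add_mul_sub_le_of_hasDerivAt h0 ht ha, ht.1]
    · simpa [hA0, hA1] using
        hconv.le_on_segment h0 h1 (by rwa [segment_eq_Icc zero_le_one] : t ∈ segment ℝ 0 1)

noncomputable def bernsteinSum (n : ℕ) (c : ℕ → ℝ) (t : ℝ) : ℝ :=
  ∑ k ∈ Finset.range (n + 1), c k * bern n k t

section Bernstein

open Finset Polynomial

variable (n : ℕ) (c : ℕ → ℝ)

lemma bern_eq_eval (k : ℕ) (t : ℝ) : bern n k t = (bernsteinPolynomial ℝ n k).eval t := by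
  simp [bern, bernsteinPolynomial]

lemma bernsteinSum_apply_zero : bernsteinSum n c 0 = c 0 := by
  simp [bernsteinSum, bern_eq_eval, bernsteinPolynomial.eval_at_0]

lemma bernsteinSum_apply_one : bernsteinSum n c 1 = c n := by
  simp [bernsteinSum, bern_eq_eval, bernsteinPolynomial.eval_at_1]

variable {n c} in
lemma bernsteinSum_nonneg {t : ℝ} (hc : ∀ k ∈ range (n + 1), 0 ≤ c k) (ht : t ∈ Set.Icc 0 1) :
    0 ≤ bernsteinSum n c t :=
  sum_nonneg fun k hk => mul_nonneg (hc k hk) <|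
    mul_nonneg (mul_nonneg (Nat.cast_nonneg _) (pow_nonneg ht.1 _)) (pow_nonneg (sub_nonneg.2 ht.2) _)

lemma derivative_sum_bernsteinPolynomial :
    derivative (∑ k ∈ range (n + 2), C (c k) * bernsteinPolynomial ℝ (n + 1) k) =
      (n + 1 : ℝ[X]) * ∑ k ∈ range (n + 1), C (c (k + 1) - c k) * bernsteinPolynomial ℝ n k := by
  set B := bernsteinPolynomial ℝ n
  have hshift := sum_range_succ' (fun k => C (c k) * B k) (n + 1)
  rw [sum_range_succ, show B (n + 1) = 0 from bernsteinPolynomial.eq_zero_of_lt ℝ n.lt_succ_self,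
    mul_zero, add_zero] at hshift
  have hterm (k : ℕ) : C (c (k + 1)) * derivative (bernsteinPolynomial ℝ (n + 1) (k + 1)) =
      (n + 1 : ℝ[X]) * (C (c (k + 1)) * B k - C (c (k + 1)) * B (k + 1)) := by
    rw [bernsteinPolynomial.derivative_succ_aux]; ring
  simp only [derivative_sum, derivative_mul, derivative_C, zero_mul, zero_add]
  rw [sum_range_succ', bernsteinPolynomial.derivative_zero]
  simp only [hterm, ← mul_sum, sum_sub_distrib, C_sub, sub_mul, hshift, Nat.cast_add, Nat.cast_one,
    add_tsub_cancel_right]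
  ring

theorem hasDerivAt_bernsteinSum (t : ℝ) :
    HasDerivAt (bernsteinSum (n + 1) c) ((n + 1) * bernsteinSum n (fwdDiff 1 c) t) t := by
  have hpoly : bernsteinSum (n + 1) c =
      fun s => (∑ k ∈ range (n + 2), C (c k) * bernsteinPolynomial ℝ (n + 1) k).eval s := by
    ext s; simp [bernsteinSum, bern_eq_eval, eval_finsetSum]
  rw [hpoly]
  refine (Polynomial.hasDerivAt _ t).congr_deriv ?_
  rw [derivative_sum_bernsteinPolynomial]
  simp [bernsteinSum, fwdDiff, bern_eq_eval, eval_finsetSum]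

end Bernstein

lemma convexOn_bernsteinSum_three_iff (c : ℕ → ℝ) :
    ConvexOn ℝ (Icc 0 1) (bernsteinSum 3 c) ↔
      0 ≤ c 0 - 2 * c 1 + c 2 ∧ 0 ≤ c 1 - 2 * c 2 + c 3 := by
  have hd1 (t : ℝ) : HasDerivAt (bernsteinSum 3 c) (3 * bernsteinSum 2 (fwdDiff 1 c) t) t := by
    refine (hasDerivAt_bernsteinSum 2 c t).congr_deriv ?_; norm_num
  have hd2 (t : ℝ) : HasDerivAt (fun t => 3 * bernsteinSum 2 (fwdDiff 1 c) t)
      (6 * bernsteinSum 1 (fwdDiff 1 (fwdDiff 1 c)) t) t := by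
    refine ((hasDerivAt_bernsteinSum 1 (fwdDiff 1 c) t).const_mul 3).congr_deriv ?_; ring
  have hd2_zero : bernsteinSum 1 (fwdDiff 1 (fwdDiff 1 c)) 0 = c 0 - 2 * c 1 + c 2 := by
    simp [bernsteinSum_apply_zero, fwdDiff]; ring
  have hd2_one : bernsteinSum 1 (fwdDiff 1 (fwdDiff 1 c)) 1 = c 1 - 2 * c 2 + c 3 := by
    simp [bernsteinSum_apply_one, fwdDiff]; ring
  constructor
  · intro hconv
    have h0 := hconv.nonneg_of_hasDerivWithinAt2 (fun y _ => hd1 y) (hd2 0).hasDerivWithinAt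
      (accPt_Icc_left zero_lt_one)
    have h1 := hconv.nonneg_of_hasDerivWithinAt2 (fun y _ => hd1 y) (hd2 1).hasDerivWithinAt
      (accPt_Icc_right zero_lt_one)
    rw [hd2_zero] at h0
    rw [hd2_one] at h1
    constructor <;> linarith
  · rintro ⟨h0, h1⟩
    refine convexOn_of_hasDerivWithinAt2_nonneg (convex_Icc 0 1)
      (fun x _ => (hd1 x).continuousAt.continuousWithinAt) (fun x _ => (hd1 x).hasDerivWithinAt)
      (fun x _ => (hd2 x).hasDerivWithinAt) fun x hx => ?_
    rw [interior_Icc] at hx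
    refine mul_nonneg (by norm_num) (bernsteinSum_nonneg (fun k hk => ?_) (Ioo_subset_Icc_self hx))
    rw [Finset.mem_range] at hk
    interval_cases k <;> simp [fwdDiff] <;> linarith

theorem pickands_degree_three (c : ℕ → ℝ) (A : ℝ → ℝ)
    (hA : ∀ t, A t = ∑ k ∈ Finset.range 4, c k * bern 3 k t) :
    IsPickands A ↔
      (c 0 = 1 ∧ c 3 = 1 ∧ 2 / 3 ≤ min (c 1) (c 2) ∧
        max (2 * c 1 - c 2) (2 * c 2 - c 1) ≤ 1) := by
  obtain rfl : A = bernsteinSum 3 c := funext hA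
  have hderiv0 : HasDerivAt (bernsteinSum 3 c) (3 * (c 1 - c 0)) 0 := by
    refine (hasDerivAt_bernsteinSum 2 c 0).congr_deriv ?_
    simp [bernsteinSum_apply_zero, fwdDiff]; norm_num
  have hderiv1 : HasDerivAt (bernsteinSum 3 c) (3 * (c 3 - c 2)) 1 := by
    refine (hasDerivAt_bernsteinSum 2 c 1).congr_deriv ?_
    simp [bernsteinSum_apply_one, fwdDiff]; norm_num
  rw [isPickands_iff_of_hasDerivAt hderiv0 hderiv1, convexOn_bernsteinSum_three_iff,
    bernsteinSum_apply_zero, bernsteinSum_apply_one, le_min_iff, max_le_iff]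
  constructor
  · rintro ⟨⟨h02, h13⟩, hc0, hc3, hc1, hc2⟩
    exact ⟨hc0, hc3, ⟨by linarith, by linarith⟩, by linarith, by linarith⟩
  · rintro ⟨hc0, hc3, ⟨hc1, hc2⟩, h12, h21⟩
    exact ⟨⟨by linarith, by linarith⟩, hc0, hc3, by linarith, by linarith⟩
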